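/- arXiv:1110.2860 — 5 statements merged into one kernel-verified Lean document; each statement's English description precedes it below -/
import Mathlib

section
/- Let N ≥ 1, let μ_1, …, μ_N be pairwise distinct nonzero real numbers and let Λ_1, …, Λ_N be complex numbers. If Im(Σ_{j=1}^N Λ_j e^{i μ_j t}) ≥ 0 for every real t ≥ 0, then Im(Σ_{j=1}^N Λ_j e^{i μ_j t}) = 0 for every real t. -/
/-!
Write `g t = ∑ j, Λ j * exp (i μ_j t)`. Since all frequencies are nonzero, `∫₀ᵀ g` stays bounded,
hence so does `∫₀ᵀ Im g`. For `t ≥ 0` we have `|g - conj g| = 2 Im g`, so for every real `x` the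
integral `∫₀ᵀ (g - conj g) e^{-ixt}` is bounded as well. But `g - conj g` is again an exponential
sum, and the integral of its product with `e^{-ixt}` grows like `T` times the total coefficient of
the frequency `x`. Hence every such coefficient vanishes, so `g = conj g`.
-/

open Complex ComplexConjugate Finset intervalIntegral

noncomputable def expSum {ι : Type*} [Fintype ι] (ν : ι → ℝ) (c : ι → ℂ) (t : ℝ) : ℂ :=
  ∑ i, c i * exp (I * ν i * t)

lemma norm_integral_cexp_I_mul_le {ν : ℝ} (hν : ν ≠ 0) (T : ℝ) :
    ‖∫ t in (0 : ℝ)..T, exp (I * ν * t)‖ ≤ 2 / |ν| := by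
  have hIν : I * ν ≠ 0 := mul_ne_zero I_ne_zero (ofReal_ne_zero.2 hν)
  rw [integral_exp_mul_complex hIν, norm_div, norm_mul, norm_I, one_mul, norm_real,
    Real.norm_eq_abs]
  gcongr
  calc ‖exp (I * ν * T) - exp (I * ν * (0 : ℝ))‖
      ≤ ‖exp (I * ν * T)‖ + ‖exp (I * ν * (0 : ℝ))‖ := norm_sub_le _ _
    _ = 2 := by
      rw [mul_assoc, ← ofReal_mul, norm_exp_I_mul_ofReal, ofReal_zero, mul_zero, exp_zero,
        norm_one]
      norm_num

section ExpSum

variable {ι : Type*} [Fintype ι] (ν : ι → ℝ) (c : ι → ℂ)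

lemma continuous_expSum : Continuous (expSum ν c) := by
  unfold expSum
  fun_prop

lemma expSum_add_const (a t : ℝ) :
    expSum (fun i => ν i + a) c t = exp (I * a * t) * expSum ν c t := by
  simp only [expSum, mul_sum]
  refine sum_congr rfl fun i _ => ?_
  rw [mul_left_comm, ← exp_add]
  push_cast
  ring_nf

lemma norm_expSum_add_const (a t : ℝ) :
    ‖expSum (fun i => ν i + a) c t‖ = ‖expSum ν c t‖ := by
  rw [expSum_add_const, norm_mul, mul_assoc, ← ofReal_mul, norm_exp_I_mul_ofReal, one_mul]

lemma conj_expSum (t : ℝ) :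
    conj (expSum ν c t) = expSum (fun i => -ν i) (fun i => conj (c i)) t := by
  simp only [expSum, map_sum, map_mul, ← exp_conj, conj_I, conj_ofReal]
  refine sum_congr rfl fun i _ => ?_
  push_cast
  ring_nf

lemma expSum_sub_conj (t : ℝ) :
    expSum ν c t - conj (expSum ν c t)
      = expSum (Sum.elim ν fun i => -ν i) (Sum.elim c fun i => -conj (c i)) t := by
  rw [conj_expSum, expSum, expSum, expSum, Fintype.sum_sum_type, sub_eq_add_neg,
    ← sum_neg_distrib]
  simp

lemma expSum_eq_zero_of_forall_sum_fiber_eq_zero (h : ∀ x, ∑ i with ν i = x, c i = 0)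
    (t : ℝ) : expSum ν c t = 0 := by
  rw [expSum, ← sum_fiberwise_of_maps_to (fun i _ => mem_image_of_mem ν (mem_univ i))]
  refine sum_eq_zero fun x _ => ?_
  calc ∑ i with ν i = x, c i * exp (I * ν i * t)
      = (∑ i with ν i = x, c i) * exp (I * x * t) := by
        rw [sum_mul]
        exact sum_congr rfl fun i hi => by rw [(mem_filter.1 hi).2]
    _ = 0 := by rw [h, zero_mul]

lemma expSum_eq_sum_fiber_zero_add (t : ℝ) :
    expSum ν c t
      = (∑ i with ν i = 0, c i) + expSum ν (fun i => if ν i = 0 then 0 else c i) t := by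
  rw [expSum, expSum, sum_filter, ← sum_add_distrib]
  refine sum_congr rfl fun i _ => ?_
  split_ifs with h <;> simp [h]

lemma norm_integral_expSum_le (h : ∀ i, ν i = 0 → c i = 0) (T : ℝ) :
    ‖∫ t in (0 : ℝ)..T, expSum ν c t‖ ≤ ∑ i, 2 * ‖c i‖ / |ν i| := by
  unfold expSum
  rw [integral_finsetSum fun i _ => (by fun_prop : Continuous _).intervalIntegrable _ _]
  refine (norm_sum_le _ _).trans (sum_le_sum fun i _ => ?_)
  by_cases hν : ν i = 0
  · simp [h i hν]
  · rw [integral_const_mul, norm_mul, mul_comm 2, mul_div_assoc]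
    gcongr
    exact norm_integral_cexp_I_mul_le hν T

lemma integral_im_expSum_le (h : ∀ i, ν i = 0 → c i = 0) (T : ℝ) :
    ∫ t in (0 : ℝ)..T, (expSum ν c t).im ≤ ∑ i, 2 * ‖c i‖ / |ν i| := by
  have him : ∫ t in (0 : ℝ)..T, (expSum ν c t).im = (∫ t in (0 : ℝ)..T, expSum ν c t).im := by
    simpa using intervalIntegral_im ((continuous_expSum ν c).intervalIntegrable 0 T)
  rw [him]
  exact (im_le_norm _).trans (norm_integral_expSum_le ν c h T)

lemma sum_fiber_zero_eq_zero_of_norm_integral_le {C : ℝ}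
    (hC : ∀ T, 0 ≤ T → ‖∫ t in (0 : ℝ)..T, expSum ν c t‖ ≤ C) : ∑ i with ν i = 0, c i = 0 := by
  set a := ∑ i with ν i = 0, c i
  set c' := fun i => if ν i = 0 then 0 else c i
  set D := ∑ i, 2 * ‖c' i‖ / |ν i|
  have hlinear : ∀ T, 0 ≤ T → T * ‖a‖ ≤ C + D := by
    intro T hT
    have hsplit :
        ∫ t in (0 : ℝ)..T, expSum ν c t = T * a + ∫ t in (0 : ℝ)..T, expSum ν c' t := by
      simp_rw [expSum_eq_sum_fiber_zero_add ν c]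
      rw [integral_add intervalIntegrable_const
        ((continuous_expSum ν c').intervalIntegrable _ _), integral_const, sub_zero,
        real_smul]
    have hrest := norm_integral_expSum_le ν c' (fun i hi => if_pos hi) T
    calc T * ‖a‖ = ‖(T : ℂ) * a‖ := by rw [norm_mul, norm_real, Real.norm_of_nonneg hT]
      _ ≤ ‖∫ t in (0 : ℝ)..T, expSum ν c t‖ + ‖∫ t in (0 : ℝ)..T, expSum ν c' t‖ := by
        rw [hsplit]
        exact norm_le_add_norm_add _ _
      _ ≤ C + D := add_le_add (hC T hT) hrest
  by_contra ha
  have ha' : 0 < ‖a‖ := norm_pos_iff.2 ha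
  have hCD : 0 ≤ C + D := by simpa using hlinear 0 le_rfl
  have := hlinear ((C + D + 1) / ‖a‖) (by positivity)
  rw [div_mul_cancel₀ _ ha'.ne'] at this
  linarith

theorem im_expSum_eq_zero_of_im_nonneg (hν : ∀ i, ν i ≠ 0)
    (h : ∀ t, 0 ≤ t → 0 ≤ (expSum ν c t).im) (t : ℝ) : (expSum ν c t).im = 0 := by
  set C := ∑ i, 2 * ‖c i‖ / |ν i|
  have hmean := integral_im_expSum_le ν c fun i h0 => absurd h0 (hν i)
  set ν' := Sum.elim ν fun i => -ν i
  set c' := Sum.elim c fun i => -conj (c i)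
  have hnorm : ∀ t, 0 ≤ t → ‖expSum ν' c' t‖ = 2 * (expSum ν c t).im := by
    intro t ht
    rw [← expSum_sub_conj, sub_conj, norm_mul, norm_I, mul_one, norm_real,
      Real.norm_of_nonneg (by linarith [h t ht])]
  have hfiber : ∀ x, ∑ i with ν' i = x, c' i = 0 := by
    intro x
    have hbound :
        ∀ T, 0 ≤ T → ‖∫ t in (0 : ℝ)..T, expSum (fun i => ν' i + -x) c' t‖ ≤ 2 * C := by
      intro T hT
      calc ‖∫ t in (0 : ℝ)..T, expSum (fun i => ν' i + -x) c' t‖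
          ≤ ∫ t in (0 : ℝ)..T, ‖expSum (fun i => ν' i + -x) c' t‖ :=
            norm_integral_le_integral_norm hT
        _ = ∫ t in (0 : ℝ)..T, 2 * (expSum ν c t).im := by
            refine integral_congr fun t ht => ?_
            rw [Set.uIcc_of_le hT] at ht
            rw [norm_expSum_add_const, hnorm t ht.1]
        _ = 2 * ∫ t in (0 : ℝ)..T, (expSum ν c t).im := integral_const_mul _ _
        _ ≤ 2 * C := by linarith [hmean T]
    simpa [← sub_eq_add_neg, sub_eq_zero] using
      sum_fiber_zero_eq_zero_of_norm_integral_le _ c' hbound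
  have hzero := expSum_eq_zero_of_forall_sum_fiber_eq_zero ν' c' hfiber t
  rw [← expSum_sub_conj, sub_conj] at hzero
  simpa using hzero

end ExpSum

theorem stmt_2_general (N : ℕ) (μ : Fin N → ℝ)
    (hμ0 : ∀ j, μ j ≠ 0) (Λ : Fin N → ℂ)
    (h : ∀ t : ℝ, 0 ≤ t →
      0 ≤ (∑ j, Λ j * Complex.exp (Complex.I * (μ j : ℂ) * (t : ℂ))).im) :
    ∀ t : ℝ, (∑ j, Λ j * Complex.exp (Complex.I * (μ j : ℂ) * (t : ℂ))).im = 0 :=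
  im_expSum_eq_zero_of_im_nonneg μ Λ hμ0 h

/-- A finite exponential sum with pairwise distinct nonzero real frequencies whose
imaginary part is nonnegative on the half-line `[0, ∞)` has identically vanishing
imaginary part. -/
theorem stmt_2 (N : ℕ) (hN : 1 ≤ N) (μ : Fin N → ℝ) (hμ : Function.Injective μ)
    (hμ0 : ∀ j, μ j ≠ 0) (Λ : Fin N → ℂ)
    (h : ∀ t : ℝ, 0 ≤ t →
      0 ≤ (∑ j, Λ j * Complex.exp (Complex.I * (μ j : ℂ) * (t : ℂ))).im) :
    ∀ t : ℝ, (∑ j, Λ j * Complex.exp (Complex.I * (μ j : ℂ) * (t : ℂ))).im = 0 :=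
  stmt_2_general N μ hμ0 Λ h
end

section
/- Let N ≥ 1, let μ_1, …, μ_N be pairwise distinct nonzero real numbers and let Λ_1, …, Λ_N be complex numbers such that Im(Σ_{j=1}^N Λ_j e^{i μ_j t}) ≥ 0 for every real t ≥ 0. Then for every index j: if there is an index k with μ_k = −μ_j, then Λ_j equals the complex conjugate of Λ_k; and if −μ_j does not belong to {μ_1, …, μ_N}, then Λ_j = 0. In particular, if μ_j + μ_k ≠ 0 for all j, k, then Λ_j = 0 for every j. -/
/-!
Let `P(t) = ∑ Λ_j e^{i μ_j t}` and `f = Im P`, nonnegative on `[0, ∞)`. Taking mean values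
`lim T⁻¹ ∫₀ᵀ` of exponential sums picks out the coefficients of frequency zero, so `f` has mean
`0` (no `μ_j` vanishes), while `e^{i μ_j t} f(t)` has mean
`(∑_{μ_k = -μ_j} Λ_k - conj Λ_j) / 2i`. For a nonnegative function the norm of such a Fourier
mean is bounded by its plain mean (integrate against `1 - Re (u e^{i α t}) ≥ 0` with `‖u‖ ≤ 1`),
so all these means vanish, which is the coefficient identity.
-/

open Complex ComplexConjugate Filter Topology intervalIntegral

def HasMean (g : ℝ → ℂ) (m : ℂ) : Prop :=
  Tendsto (fun T : ℝ => T⁻¹ • ∫ t in (0 : ℝ)..T, g t) atTop (𝓝 m)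

namespace HasMean

variable {f g : ℝ → ℂ} {m n : ℂ}

lemma const_mul (c : ℂ) (hg : HasMean g m) : HasMean (fun t => c * g t) (c * m) :=
  (Tendsto.const_mul c hg).congr fun T => by rw [integral_const_mul, mul_smul_comm]

lemma sub (hfm : HasMean f m) (hgn : HasMean g n) (hf : Continuous f) (hg : Continuous g) :
    HasMean (fun t => f t - g t) (m - n) :=
  (Tendsto.sub hfm hgn).congr fun T => by
    rw [integral_sub (hf.intervalIntegrable _ _) (hg.intervalIntegrable _ _), smul_sub]

lemma sum {ι : Type*} (s : Finset ι) {g : ι → ℝ → ℂ} {m : ι → ℂ}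
    (hc : ∀ i ∈ s, Continuous (g i)) (h : ∀ i ∈ s, HasMean (g i) (m i)) :
    HasMean (fun t => ∑ i ∈ s, g i t) (∑ i ∈ s, m i) :=
  (tendsto_finsetSum s h).congr fun T => by
    rw [integral_finsetSum fun i hi => (hc i hi).intervalIntegrable _ _, Finset.smul_sum]

lemma re (h : HasMean g m) (hg : Continuous g) : HasMean (fun t => ((g t).re : ℂ)) m.re :=
  ((continuous_ofReal.comp continuous_re).tendsto m |>.comp h).congr fun T => by
    rw [Function.comp_apply, Function.comp_apply, integral_ofReal, smul_re, smul_eq_mul,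
      real_smul, ofReal_mul]
    exact congrArg (_ * ofReal ·) (intervalIntegral_re (hg.intervalIntegrable _ _)).symm

lemma re_nonneg_of_ofReal {f : ℝ → ℝ} (h : HasMean (fun t => (f t : ℂ)) m)
    (hf : ∀ t, 0 ≤ t → 0 ≤ f t) : 0 ≤ m.re := by
  refine ge_of_tendsto ((continuous_re.tendsto m).comp h) ?_
  filter_upwards [eventually_ge_atTop 0] with T hT
  simp only [Function.comp_apply, integral_ofReal, real_smul, ← ofReal_mul, ofReal_re]
  exact mul_nonneg (inv_nonneg.mpr hT) (integral_nonneg hT fun t ht => hf t ht.1)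

end HasMean

lemma norm_exp_I_mul_mul (α t : ℝ) : ‖exp (I * α * t)‖ = 1 := by
  rw [mul_assoc, ← ofReal_mul, norm_exp_I_mul_ofReal]

lemma norm_integral_exp_mul_I_le {α : ℝ} (hα : α ≠ 0) (T : ℝ) :
    ‖∫ t in (0 : ℝ)..T, exp (I * α * t)‖ ≤ 2 / |α| := by
  have hIα : I * α ≠ 0 := mul_ne_zero I_ne_zero (ofReal_ne_zero.mpr hα)
  rw [integral_exp_mul_complex hIα, norm_div, norm_mul, norm_I, one_mul, norm_real,
    Real.norm_eq_abs, ofReal_zero, mul_zero, exp_zero]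
  gcongr
  calc ‖exp (I * α * T) - 1‖ ≤ ‖exp (I * α * T)‖ + ‖(1 : ℂ)‖ := norm_sub_le _ _
    _ = 2 := by rw [norm_exp_I_mul_mul, norm_one, one_add_one_eq_two]

lemma hasMean_exp_mul_I (α : ℝ) :
    HasMean (fun t => exp (I * α * t)) (if α = 0 then 1 else 0) := by
  split_ifs with hα
  · refine tendsto_const_nhds.congr' ?_
    filter_upwards [eventually_ne_atTop 0] with T hT
    simp [hα, hT]
  · have hbound := tendsto_inv_atTop_zero.mul_const (2 / |α|)
    rw [zero_mul] at hbound
    refine squeeze_zero_norm' ?_ hbound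
    filter_upwards [eventually_gt_atTop 0] with T hT
    rw [norm_smul, Real.norm_of_nonneg (inv_nonneg.mpr hT.le)]
    exact mul_le_mul_of_nonneg_left (norm_integral_exp_mul_I_le hα T) (inv_nonneg.mpr hT.le)

section ExpSum

variable {ι : Type*} [Fintype ι] (c : ι → ℂ) (μ : ι → ℝ)

lemma hasMean_sum_exp :
    HasMean (fun t => ∑ j, c j * exp (I * μ j * t)) (∑ j with μ j = 0, c j) := by
  have hmean : ∑ j with μ j = 0, c j = ∑ j, c j * if μ j = 0 then 1 else 0 := by
    simp_rw [Finset.sum_filter, mul_boole]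
  rw [hmean]
  exact HasMean.sum _ (fun j _ => by fun_prop) fun j _ =>
    (hasMean_exp_mul_I (μ j)).const_mul (c j)

lemma hasMean_exp_mul_sum_exp (α : ℝ) :
    HasMean (fun t => exp (I * α * t) * ∑ j, c j * exp (I * μ j * t))
      (∑ j with μ j = -α, c j) := by
  have hshift : ∀ t : ℝ, exp (I * α * t) * ∑ j, c j * exp (I * μ j * t) =
      ∑ j, c j * exp (I * ↑(μ j + α) * t) := fun t => by
    rw [Finset.mul_sum]
    refine Finset.sum_congr rfl fun j _ => ?_
    rw [mul_left_comm, ← exp_add]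
    push_cast
    ring_nf
  simp_rw [hshift, ← add_eq_zero_iff_eq_neg]
  exact hasMean_sum_exp c (fun j => μ j + α)

lemma conj_sum_exp (t : ℝ) :
    conj (∑ j, c j * exp (I * μ j * t)) = ∑ j, conj (c j) * exp (I * ↑(-μ j) * t) := by
  simp [map_sum, ← exp_conj]

lemma hasMean_exp_mul_im_sum_exp (α : ℝ) :
    HasMean (fun t => exp (I * α * t) * ((∑ j, c j * exp (I * μ j * t)).im : ℂ))
      ((∑ j with μ j = -α, c j - ∑ j with μ j = α, conj (c j)) / (2 * I)) := by
  have him : ∀ t : ℝ, exp (I * α * t) * ((∑ j, c j * exp (I * μ j * t)).im : ℂ) =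
      (2 * I)⁻¹ * (exp (I * α * t) * ∑ j, c j * exp (I * μ j * t) -
        exp (I * α * t) * ∑ j, conj (c j) * exp (I * ↑(-μ j) * t)) := fun t => by
    rw [im_eq_sub_conj, conj_sum_exp]
    ring
  have hconj := hasMean_exp_mul_sum_exp (fun j => conj (c j)) (fun j => -μ j) α
  simp only [neg_inj] at hconj
  simp_rw [him, div_eq_inv_mul]
  exact ((hasMean_exp_mul_sum_exp c μ α).sub hconj (by fun_prop) (by fun_prop)).const_mul _

end ExpSum

lemma norm_le_re_of_hasMean {f : ℝ → ℝ} (hf : Continuous f) (hf0 : ∀ t, 0 ≤ t → 0 ≤ f t)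
    {m₀ m : ℂ} {α : ℝ} (h₀ : HasMean (fun t => (f t : ℂ)) m₀)
    (h : HasMean (fun t => exp (I * α * t) * f t) m) : ‖m‖ ≤ m₀.re := by
  set u : ℂ := conj m / ‖m‖
  have hu : ‖u‖ ≤ 1 := by
    rw [norm_div, norm_conj, norm_real, norm_norm]
    exact div_self_le_one _
  have hum : (u * m).re = ‖m‖ := by
    rw [div_mul_eq_mul_div, conj_mul', ← ofReal_pow, ← ofReal_div, ofReal_re, sq,
      mul_self_div_self]
  have hg0 : ∀ t, 0 ≤ t → 0 ≤ f t - (u * (exp (I * α * t) * f t)).re := fun t ht =>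
    sub_nonneg.mpr <| calc
      (u * (exp (I * α * t) * f t)).re ≤ ‖u * (exp (I * α * t) * f t)‖ := re_le_norm _
      _ = ‖u‖ * f t := by
        rw [norm_mul, norm_mul, norm_exp_I_mul_mul, norm_real, Real.norm_of_nonneg (hf0 t ht),
          one_mul]
      _ ≤ f t := mul_le_of_le_one_left (hf0 t ht) hu
  have hg : HasMean (fun t => ((f t - (u * (exp (I * α * t) * f t)).re : ℝ) : ℂ))
      (m₀ - (u * m).re) := by
    simp only [ofReal_sub]
    exact h₀.sub ((h.const_mul u).re (by fun_prop)) (by fun_prop) (by fun_prop)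
  have := hg.re_nonneg_of_ofReal hg0
  rw [sub_re, ofReal_re, hum] at this
  linarith

theorem sum_conj_eq_sum_neg_of_im_nonneg {ι : Type*} [Fintype ι] (c : ι → ℂ) (μ : ι → ℝ)
    (hμ0 : ∀ j, μ j ≠ 0) (h : ∀ t : ℝ, 0 ≤ t → 0 ≤ (∑ j, c j * exp (I * μ j * t)).im)
    (α : ℝ) : ∑ j with μ j = α, conj (c j) = ∑ j with μ j = -α, c j := by
  have h₀ := hasMean_exp_mul_im_sum_exp c μ 0
  simp only [ofReal_zero, mul_zero, zero_mul, exp_zero, one_mul, neg_zero, hμ0,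
    Finset.filter_false, Finset.sum_empty, sub_zero, zero_div] at h₀
  have hα := norm_le_re_of_hasMean (by fun_prop) h h₀ (hasMean_exp_mul_im_sum_exp c μ α)
  rw [zero_re, norm_le_zero_iff, div_eq_zero_iff, sub_eq_zero] at hα
  exact (hα.resolve_right (mul_ne_zero two_ne_zero I_ne_zero)).symm

theorem stmt_3_general (N : ℕ) (μ : Fin N → ℝ) (hμ : Function.Injective μ)
    (hμ0 : ∀ j, μ j ≠ 0) (Λ : Fin N → ℂ)
    (h : ∀ t : ℝ, 0 ≤ t →
      0 ≤ (∑ j, Λ j * Complex.exp (Complex.I * (μ j : ℂ) * (t : ℂ))).im) :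
    (∀ j k, μ k = -μ j → Λ j = starRingEnd ℂ (Λ k)) ∧
    (∀ j, (¬ ∃ k, μ k = -μ j) → Λ j = 0) ∧
    ((∀ j k, μ j + μ k ≠ 0) → ∀ j, Λ j = 0) := by
  have hconj : ∀ j, conj (Λ j) = ∑ k with μ k = -μ j, Λ k := fun j => by
    rw [← sum_conj_eq_sum_neg_of_im_nonneg Λ μ hμ0 h (μ j)]
    simp only [hμ.eq_iff, Finset.filter_eq', Finset.mem_univ, if_true, Finset.sum_singleton]
  have unpaired : ∀ j, (¬ ∃ k, μ k = -μ j) → Λ j = 0 := fun j hj => by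
    rw [← map_eq_zero (starRingEnd ℂ), hconj,
      Finset.filter_false_of_mem fun k _ hk => hj ⟨k, hk⟩, Finset.sum_empty]
  refine ⟨fun j k hk => ?_, unpaired, fun hsum j => ?_⟩
  · rw [← conj_conj (Λ j), hconj, ← hk]
    simp only [hμ.eq_iff, Finset.filter_eq', Finset.mem_univ, if_true, Finset.sum_singleton]
  · exact unpaired j fun ⟨k, hk⟩ => hsum j k (by rw [hk, add_neg_cancel])

/-- Coefficient identification for a finite exponential sum with pairwise distinct
nonzero real frequencies whose imaginary part is nonnegative on the half-line:
frequencies paired by `μ_k = -μ_j` force `Λ_j = conj Λ_k`, unpaired frequencies force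
`Λ_j = 0`; in particular if no two frequencies sum to zero all coefficients vanish. -/
theorem stmt_3 (N : ℕ) (hN : 1 ≤ N) (μ : Fin N → ℝ) (hμ : Function.Injective μ)
    (hμ0 : ∀ j, μ j ≠ 0) (Λ : Fin N → ℂ)
    (h : ∀ t : ℝ, 0 ≤ t →
      0 ≤ (∑ j, Λ j * Complex.exp (Complex.I * (μ j : ℂ) * (t : ℂ))).im) :
    (∀ j k, μ k = -μ j → Λ j = starRingEnd ℂ (Λ k)) ∧
    (∀ j, (¬ ∃ k, μ k = -μ j) → Λ j = 0) ∧
    ((∀ j k, μ j + μ k ≠ 0) → ∀ j, Λ j = 0) :=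
  stmt_3_general N μ hμ hμ0 Λ h
end

section
/- Let X be a real Banach space, T > 0, and let F : ℝ × X → X be continuous, T-periodic in its first argument, and continuously (Fréchet) differentiable in its second argument with jointly continuous derivative D_z F. Define F⁰(z) := (1/T) ∫_0^T F(τ, z) dτ and U(θ, z) := ∫_0^θ (F(τ, z) − F⁰(z)) dτ. Let s < L, let v : [s, L] → X be continuously differentiable, and let ε > 0. Then for every t ∈ [s, L]: ∫_s^t (F(τ/ε, v(τ)) − F⁰(v(τ))) dτ = ε U(t/ε, v(t)) − ε U(s/ε, v(s)) − ε ∫_s^t D_z U(τ/ε, v(τ))(v'(τ)) dτ, where D_z U(θ, z) is the Fréchet derivative of U(θ, ·) at z. -/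
/-!
Both partial derivatives of `U`, namely `∂_θ U = F - F⁰` and `D_z U`, are jointly continuous, so
`U` is `C¹` on `ℝ × X` and the chain rule gives
`d/dτ [ε U(τ/ε, v τ)] = (F - F⁰)(τ/ε, v τ) + ε D_z U(τ/ε, v τ) (v' τ)`;
the identity is the fundamental theorem of calculus for this derivative. Continuity of `D_z U`
comes from differentiating under the integral sign:
`D_z U(θ, z) = ∫_0^θ (D_z F(τ, z) - D_z F⁰(z)) dτ`.
-/

open MeasureTheory Set Filter

section
variable {E G : Type*} [NormedAddCommGroup E] [NormedSpace ℝ E]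
  [NormedAddCommGroup G] [NormedSpace ℝ G]

theorem hasFDerivAt_intervalIntegral_of_continuous {f : ℝ → E → G} {f' : ℝ → E → E →L[ℝ] G}
    (hf : Continuous fun p : ℝ × E => f p.1 p.2)
    (hf' : ∀ u x, HasFDerivAt (f u) (f' u x) x)
    (hf'c : Continuous fun p : ℝ × E => f' p.1 p.2) (a b : ℝ) (x : E) :
    HasFDerivAt (fun y => ∫ u in a..b, f u y) (∫ u in a..b, f' u x) x := by
  have hK : IsCompact (uIcc a b ×ˢ ({x} : Set E)) := isCompact_uIcc.prod isCompact_singleton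
  obtain ⟨C, hC⟩ := hK.exists_bound_of_continuousOn hf'c.continuousOn
  -- the constant `C + 1` dominates `f'` on a thickening of the compact set `[a, b] × {x}`
  obtain ⟨δ, hδ, hth⟩ := hK.exists_thickening_subset_open
    (isOpen_lt (by fun_prop) continuous_const : IsOpen {p : ℝ × E | ‖f' p.1 p.2‖ < C + 1})
    fun p hp => (hC p hp).trans_lt (lt_add_one C)
  have hbound : ∀ u ∈ uIoc a b, ∀ y ∈ Metric.ball x δ, ‖f' u y‖ ≤ C + 1 := by
    intro u hu y hy
    have hmem : (u, y) ∈ Metric.thickening δ (uIcc a b ×ˢ ({x} : Set E)) :=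
      Metric.mem_thickening_iff.2
        ⟨(u, x), mk_mem_prod (Ioc_subset_Icc_self hu) rfl, by simpa [Prod.dist_eq] using hy⟩
    exact (hth hmem).le
  have hf_u : ∀ y, Continuous fun u => f u y := fun y =>
    hf.comp (continuous_id.prodMk continuous_const)
  exact intervalIntegral.hasFDerivAt_integral_of_dominated_of_fderiv_le
    (F' := fun y u => f' u y) (bound := fun _ => C + 1) (Metric.ball_mem_nhds x hδ)
    (Eventually.of_forall fun y => (hf_u y).aestronglyMeasurable)
    ((hf_u x).intervalIntegrable a b)
    (hf'c.comp (continuous_id.prodMk continuous_const)).aestronglyMeasurable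
    (Eventually.of_forall hbound) intervalIntegrable_const
    (Eventually.of_forall fun u _ y _ => hf' u y)

theorem hasDerivAt_smul_apply_div {g g₁ : ℝ → E → G} {g₂ : ℝ → E → E →L[ℝ] G}
    (hg₁ : ∀ θ x, HasDerivAt (g · x) (g₁ θ x) θ) (hg₁c : Continuous fun p : ℝ × E => g₁ p.1 p.2)
    (hg₂ : ∀ θ x, HasFDerivAt (g θ) (g₂ θ x) x) (hg₂c : Continuous fun p : ℝ × E => g₂ p.1 p.2)
    {ε : ℝ} (hε : ε ≠ 0) {v : ℝ → E} {v' : E} {τ : ℝ} (hv : HasDerivAt v v' τ) :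
    HasDerivAt (fun τ => ε • g (τ / ε) (v τ)) (g₁ (τ / ε) (v τ) + ε • g₂ (τ / ε) (v τ) v') τ := by
  have hg : HasFDerivAt (fun p : ℝ × E => g p.1 p.2)
      ((ContinuousLinearMap.toSpanSingleton ℝ (g₁ (τ / ε) (v τ))).coprod (g₂ (τ / ε) (v τ)))
      (τ / ε, v τ) :=
    (hasStrictFDerivAt_uncurry_coprod (u := (τ / ε, v τ))
      (f₁ := fun θ x => ContinuousLinearMap.toSpanSingleton ℝ (g₁ θ x))
      (Eventually.of_forall fun p => hg₁ p.1 p.2) (Eventually.of_forall fun p => hg₂ p.1 p.2)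
      (ContinuousLinearMap.toSpanSingletonCLE.continuous.comp hg₁c).continuousAt
      hg₂c.continuousAt).hasFDerivAt
  have hcurve : HasDerivAt (fun τ => (τ / ε, v τ)) (1 / ε, v') τ :=
    ((hasDerivAt_id τ).div_const ε).prodMk hv
  refine ((hg.comp_hasDerivAt τ hcurve).const_smul ε).congr_deriv ?_
  simp only [one_div, ContinuousLinearMap.coprod_apply, ContinuousLinearMap.toSpanSingleton_apply,
    smul_add, smul_smul, mul_inv_cancel₀ hε, one_smul]

theorem integral_comp_div_eq_sub_of_partials [CompleteSpace G] {g g₁ : ℝ → E → G}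
    {g₂ : ℝ → E → E →L[ℝ] G}
    (hg₁ : ∀ θ x, HasDerivAt (g · x) (g₁ θ x) θ) (hg₁c : Continuous fun p : ℝ × E => g₁ p.1 p.2)
    (hg₂ : ∀ θ x, HasFDerivAt (g θ) (g₂ θ x) x) (hg₂c : Continuous fun p : ℝ × E => g₂ p.1 p.2)
    {ε : ℝ} (hε : ε ≠ 0) {v v' : ℝ → E} {s t : ℝ}
    (hv : ∀ τ ∈ uIcc s t, HasDerivAt v (v' τ) τ) (hv' : ContinuousOn v' (uIcc s t)) :
    ∫ τ in s..t, g₁ (τ / ε) (v τ)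
      = ε • g (t / ε) (v t) - ε • g (s / ε) (v s) - ε • ∫ τ in s..t, g₂ (τ / ε) (v τ) (v' τ) := by
  have hcurve : ContinuousOn (fun τ => (τ / ε, v τ)) (uIcc s t) :=
    (continuous_id.div_const ε).continuousOn.prodMk fun τ hτ =>
      (hv τ hτ).continuousAt.continuousWithinAt
  have hint₁ : IntervalIntegrable (fun τ => g₁ (τ / ε) (v τ)) volume s t :=
    (hg₁c.comp_continuousOn hcurve).intervalIntegrable
  have hint₂ : IntervalIntegrable (fun τ => ε • g₂ (τ / ε) (v τ) (v' τ)) volume s t :=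
    (((hg₂c.comp_continuousOn hcurve).clm_apply hv').intervalIntegrable).smul ε
  have hftc := intervalIntegral.integral_eq_sub_of_hasDerivAt
    (fun τ hτ => hasDerivAt_smul_apply_div hg₁ hg₁c hg₂ hg₂c hε (hv τ hτ)) (hint₁.add hint₂)
  rw [intervalIntegral.integral_add hint₁ hint₂, intervalIntegral.integral_smul] at hftc
  rw [← hftc, add_sub_cancel_right]

end

theorem stmt_7_general {X : Type*} [NormedAddCommGroup X] [NormedSpace ℝ X] [CompleteSpace X]
    (T : ℝ)
    (F : ℝ → X → X) (DF : ℝ → X → (X →L[ℝ] X))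
    (hFcont : Continuous (fun p : ℝ × X => F p.1 p.2))
    (hDF : ∀ θ z, HasFDerivAt (F θ) (DF θ z) z)
    (hDFcont : Continuous (fun p : ℝ × X => DF p.1 p.2))
    (F0 : X → X) (hF0 : ∀ z, F0 z = (1 / T) • ∫ τ in (0:ℝ)..T, F τ z)
    (U : ℝ → X → X) (hU : ∀ θ z, U θ z = ∫ τ in (0:ℝ)..θ, (F τ z - F0 z))
    (DU : ℝ → X → (X →L[ℝ] X)) (hDU : ∀ θ z, HasFDerivAt (U θ) (DU θ z) z)
    (s L : ℝ)
    (v v' : ℝ → X) (hv : ∀ t ∈ Set.Icc s L, HasDerivAt v (v' t) t)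
    (hv' : ContinuousOn v' (Set.Icc s L))
    (ε : ℝ) (hε : 0 < ε) :
    ∀ t ∈ Set.Icc s L,
      (∫ τ in s..t, (F (τ / ε) (v τ) - F0 (v τ)))
        = ε • U (t / ε) (v t) - ε • U (s / ε) (v s)
          - ε • ∫ τ in s..t, DU (τ / ε) (v τ) (v' τ) := by
  set DF0 : X → X →L[ℝ] X := fun z => (1 / T) • ∫ τ in (0:ℝ)..T, DF τ z
  have hF0d : ∀ z, HasFDerivAt F0 (DF0 z) z := fun z => funext hF0 ▸
    (hasFDerivAt_intervalIntegral_of_continuous hFcont hDF hDFcont 0 T z).const_smul (1 / T)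
  have hF0c : Continuous F0 := continuous_iff_continuousAt.2 fun z => (hF0d z).continuousAt
  have hDF0c : Continuous DF0 :=
    have hint : Continuous fun z => ∫ τ in (0:ℝ)..T, DF τ z :=
      intervalIntegral.continuous_parametric_intervalIntegral_of_continuous'
        (f := fun z u => DF u z) (hDFcont.comp continuous_swap) 0 T
    hint.const_smul (1 / T)
  have hGc : Continuous fun p : ℝ × X => F p.1 p.2 - F0 p.2 := hFcont.sub (hF0c.comp continuous_snd)
  have hDGc : Continuous fun p : ℝ × X => DF p.1 p.2 - DF0 p.2 :=
    hDFcont.sub (hDF0c.comp continuous_snd)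
  have hDU_eq : ∀ θ z, DU θ z = ∫ u in (0:ℝ)..θ, (DF u z - DF0 z) := fun θ z =>
    (hDU θ z).unique <| funext (hU θ) ▸ hasFDerivAt_intervalIntegral_of_continuous hGc
      (fun u x => (hDF u x).sub (hF0d x)) hDGc 0 θ z
  have hDUc : Continuous fun p : ℝ × X => DU p.1 p.2 := by
    simp_rw [hDU_eq]
    exact intervalIntegral.continuous_parametric_intervalIntegral_of_continuous
      (f := fun (p : ℝ × X) u => DF u p.2 - DF0 p.2)
      (hDGc.comp (continuous_snd.prodMk (continuous_snd.comp continuous_fst))) continuous_fst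
  have hUθ : ∀ θ z, HasDerivAt (U · z) (F θ z - F0 z) θ := fun θ z => funext (hU · z) ▸
    ((hGc.comp (continuous_id.prodMk continuous_const)).integral_hasStrictDerivAt 0 θ).hasDerivAt
  intro t ht
  have hsub : uIcc s t ⊆ Icc s L := uIcc_subset_Icc (left_mem_Icc.2 (ht.1.trans ht.2)) ht
  exact integral_comp_div_eq_sub_of_partials hUθ hGc hDU hDUc hε.ne'
    (fun τ hτ => hv τ (hsub hτ)) (hv'.mono hsub)

/-- Integration-by-parts identity of the averaging method (Hale–Lunel): for `F`
continuous, `T`-periodic in its first argument and `C¹` in its second argument, with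
averaged field `F⁰` and zero-mean primitive `U`, and for any `C¹` curve `v` on `[s,L]`,
`∫_s^t (F(τ/ε, v(τ)) − F⁰(v(τ))) dτ
  = ε U(t/ε, v(t)) − ε U(s/ε, v(s)) − ε ∫_s^t D_z U(τ/ε, v(τ))(v'(τ)) dτ`. -/
theorem stmt_7 {X : Type*} [NormedAddCommGroup X] [NormedSpace ℝ X] [CompleteSpace X]
    (T : ℝ) (hT : 0 < T)
    (F : ℝ → X → X) (DF : ℝ → X → (X →L[ℝ] X))
    (hFcont : Continuous (fun p : ℝ × X => F p.1 p.2))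
    (hper : ∀ z, Function.Periodic (fun θ => F θ z) T)
    (hDF : ∀ θ z, HasFDerivAt (F θ) (DF θ z) z)
    (hDFcont : Continuous (fun p : ℝ × X => DF p.1 p.2))
    (F0 : X → X) (hF0 : ∀ z, F0 z = (1 / T) • ∫ τ in (0:ℝ)..T, F τ z)
    (U : ℝ → X → X) (hU : ∀ θ z, U θ z = ∫ τ in (0:ℝ)..θ, (F τ z - F0 z))
    (DU : ℝ → X → (X →L[ℝ] X)) (hDU : ∀ θ z, HasFDerivAt (U θ) (DU θ z) z)
    (s L : ℝ) (hsL : s < L)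
    (v v' : ℝ → X) (hv : ∀ t ∈ Set.Icc s L, HasDerivAt v (v' t) t)
    (hv' : ContinuousOn v' (Set.Icc s L))
    (ε : ℝ) (hε : 0 < ε) :
    ∀ t ∈ Set.Icc s L,
      (∫ τ in s..t, (F (τ / ε) (v τ) - F0 (v τ)))
        = ε • U (t / ε) (v t) - ε • U (s / ε) (v s)
          - ε • ∫ τ in s..t, DU (τ / ε) (v τ) (v' τ) :=
  stmt_7_general T F DF hFcont hDF hDFcont F0 hF0 U hU DU hDU s L v v' hv hv' ε hε
end

section
/- Let X be a real Banach space, T > 0, and let F : ℝ × X → X be continuous, T-periodic in its first argument, and continuously (Fréchet) differentiable in its second argument with jointly continuous derivative D_z F. Define F⁰(z) := (1/T) ∫_0^T F(τ, z) dτ. Let s < L and let v : [s, L] → X be continuously differentiable. Suppose there are constants M₂, M₄ ≥ 0 with ‖F(θ, v(t))‖ ≤ M₂ and ‖D_z F(θ, v(t))(v'(t))‖ ≤ M₄ for all θ ∈ ℝ and t ∈ [s, L]. Then for every ε > 0 and every t ∈ [s, L]: ‖∫_s^t (F(τ/ε, v(τ)) − F⁰(v(τ))) dτ‖ ≤ ε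 T (4 M₂ + 2 M₄ (L − s)). -/
/-!
Freeze the slow variable: on a window `[c, c + εT]` the integrand `Φ(τ/ε, v τ)` of the
oscillation `Φ = F - F⁰` differs from `Φ(τ/ε, v c)` by at most `2 M₄ εT`, by the mean value
inequality along `v`, while `τ ↦ Φ(τ/ε, v c)` integrates to zero over the window, being
`εT`-periodic with zero mean. Summing over the at most `(t - s)/(εT)` full windows in `[s, t]`
gives `2 M₄ εT (t - s)`; the leftover piece has length below `εT` and integrand bounded by `2 M₂`.
-/

open MeasureTheory Set intervalIntegral

section

variable {E : Type*} [NormedAddCommGroup E] [NormedSpace ℝ E]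

theorem Convex.norm_comp_sub_le_of_hasFDerivAt {Y : Type*} [NormedAddCommGroup Y]
    [NormedSpace ℝ Y] {G : Y → E} {DG : Y → Y →L[ℝ] E} {v v' : ℝ → Y} {S : Set ℝ} {C : ℝ}
    (hS : Convex ℝ S) (hG : ∀ t ∈ S, HasFDerivAt G (DG (v t)) (v t))
    (hv : ∀ t ∈ S, HasDerivAt v (v' t) t) (hC : ∀ t ∈ S, ‖DG (v t) (v' t)‖ ≤ C)
    {a b : ℝ} (ha : a ∈ S) (hb : b ∈ S) :
    ‖G (v b) - G (v a)‖ ≤ C * |b - a| := by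
  simpa only [Real.norm_eq_abs] using hS.norm_image_sub_le_of_norm_hasDerivWithin_le
    (f := fun t => G (v t)) (fun t ht => ((hG t ht).comp_hasDerivAt t (hv t ht)).hasDerivWithinAt)
    hC ha hb

theorem norm_smul_integral_le_of_norm_le_const {g : ℝ → E} {T C : ℝ} (hT : 0 < T)
    (hg : ∀ σ ∈ Ioc 0 T, ‖g σ‖ ≤ C) : ‖(1 / T) • ∫ σ in 0..T, g σ‖ ≤ C := by
  have hint : ‖∫ σ in 0..T, g σ‖ ≤ C * T := by
    have := norm_integral_le_of_norm_le_const fun σ hσ => hg σ (by rwa [uIoc_of_le hT.le] at hσ)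
    rwa [sub_zero, abs_of_pos hT] at this
  rw [norm_smul, Real.norm_of_nonneg (by positivity)]
  calc 1 / T * ‖∫ σ in 0..T, g σ‖ ≤ 1 / T * (C * T) := by gcongr
    _ = C := by field_simp

theorem norm_sub_smul_integral_le {g : ℝ → E} {T C : ℝ} (hT : 0 < T) (hg : ∀ σ, ‖g σ‖ ≤ C)
    (θ : ℝ) : ‖g θ - (1 / T) • ∫ σ in 0..T, g σ‖ ≤ 2 * C :=
  (norm_sub_le _ _).trans <| by
    linarith [hg θ, norm_smul_integral_le_of_norm_le_const hT fun σ (_ : σ ∈ Ioc 0 T) => hg σ]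

theorem integral_sub_average_eq_zero [CompleteSpace E] {g : ℝ → E} {T : ℝ} (hT : T ≠ 0)
    (hg : IntervalIntegrable g volume 0 T) :
    ∫ σ in 0..T, (g σ - (1 / T) • ∫ σ' in 0..T, g σ') = 0 := by
  rw [integral_sub hg intervalIntegrable_const, intervalIntegral.integral_const, sub_zero,
    smul_smul, mul_one_div_cancel hT, one_smul, sub_self]

theorem Function.Periodic.integral_comp_div_eq_zero {g : ℝ → E} {T ε : ℝ}
    (hg : Function.Periodic g T) (h0 : ∫ σ in 0..T, g σ = 0) (hε : ε ≠ 0) (c : ℝ) :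
    ∫ τ in c..c + ε * T, g (τ / ε) = 0 := by
  rw [integral_comp_div g hε, show (c + ε * T) / ε = c / ε + T by field_simp,
    hg.intervalIntegral_add_eq _ 0, zero_add, h0, smul_zero]

theorem norm_integral_le_of_sub_integral_eq_zero {f g : ℝ → E} {a b δ : ℝ} (hab : a ≤ b)
    (hf : IntervalIntegrable f volume a b) (hg : IntervalIntegrable g volume a b)
    (hg0 : ∫ τ in a..b, g τ = 0) (hfg : ∀ τ ∈ Ioc a b, ‖f τ - g τ‖ ≤ δ) :
    ‖∫ τ in a..b, f τ‖ ≤ δ * (b - a) := by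
  rw [← sub_zero (∫ τ in a..b, f τ), ← hg0, ← integral_sub hf hg,
    ← abs_of_nonneg (sub_nonneg.2 hab)]
  exact norm_integral_le_of_norm_le_const fun τ hτ => hfg τ (by rwa [uIoc_of_le hab] at hτ)

theorem norm_integral_le_of_norm_integral_window_le {f : ℝ → E} {s t P K M : ℝ} (hP : 0 < P)
    (hst : s ≤ t) (hf : IntervalIntegrable f volume s t) (hM : ∀ τ ∈ Icc s t, ‖f τ‖ ≤ M)
    (hK0 : 0 ≤ K) (hK : ∀ c, s ≤ c → c + P ≤ t → ‖∫ τ in c..c + P, f τ‖ ≤ K) :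
    ‖∫ τ in s..t, f τ‖ ≤ (t - s) / P * K + M * P := by
  set N := ⌊(t - s) / P⌋₊
  have hN : (N : ℝ) ≤ (t - s) / P := Nat.floor_le (div_nonneg (sub_nonneg.2 hst) hP.le)
  have hNP : (N : ℝ) * P ≤ t - s := (le_div_iff₀ hP).1 hN
  have hNP' : t - s < (N + 1) * P := (div_lt_iff₀ hP).1 (Nat.lt_floor_add_one _)
  set a : ℕ → ℝ := fun k => s + k * P
  have ha_succ (k : ℕ) : a (k + 1) = a k + P := by simp only [a, Nat.cast_succ]; linarith
  have ha_mem (k : ℕ) (hk : k ≤ N) : a k ∈ Icc s t := by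
    have : (k : ℝ) * P ≤ N * P := by gcongr
    constructor <;> simp only [a] <;> nlinarith
  have hint {c d : ℝ} (hc : c ∈ Icc s t) (hd : d ∈ Icc s t) : IntervalIntegrable f volume c d :=
    hf.mono_set (by rw [uIcc_of_le hst]; exact uIcc_subset_Icc hc hd)
  have hwindows : ∀ k < N, IntervalIntegrable f volume (a k) (a (k + 1)) := fun k hk =>
    hint (ha_mem k hk.le) (ha_mem (k + 1) hk)
  have hsplit : ∫ τ in s..t, f τ =
      (∑ k ∈ Finset.range N, ∫ τ in a k..a (k + 1), f τ) + ∫ τ in a N..t, f τ := by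
    rw [sum_integral_adjacent_intervals hwindows,
      integral_add_adjacent_intervals (hint (ha_mem 0 N.zero_le) (ha_mem N le_rfl))
        (hint (ha_mem N le_rfl) (right_mem_Icc.2 hst))]
    simp [a]
  have hrem : ‖∫ τ in a N..t, f τ‖ ≤ M * P := by
    have haN := ha_mem N le_rfl
    calc ‖∫ τ in a N..t, f τ‖ ≤ M * |t - a N| :=
          norm_integral_le_of_norm_le_const fun τ hτ =>
            hM τ (uIcc_subset_Icc haN (right_mem_Icc.2 hst) (uIoc_subset_uIcc hτ))
      _ ≤ M * P := by
          have hM0 : 0 ≤ M := (norm_nonneg _).trans (hM s (left_mem_Icc.2 hst))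
          gcongr
          rw [abs_of_nonneg (by linarith [haN.2])]
          simp only [a]; linarith
  calc ‖∫ τ in s..t, f τ‖
      ≤ (∑ k ∈ Finset.range N, ‖∫ τ in a k..a (k + 1), f τ‖) + ‖∫ τ in a N..t, f τ‖ := by
        rw [hsplit]; exact (norm_add_le _ _).trans (by gcongr; exact norm_sum_le _ _)
    _ ≤ N * K + M * P := by
        gcongr
        refine (Finset.sum_le_card_nsmul _ _ _ fun k hk => ?_).trans_eq
          (by rw [Finset.card_range, nsmul_eq_mul])
        rw [ha_succ]
        exact hK _ (ha_mem k (Finset.mem_range.1 hk).le).1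
          (ha_succ k ▸ (ha_mem (k + 1) (Finset.mem_range.1 hk)).2)
    _ ≤ (t - s) / P * K + M * P := by gcongr

theorem norm_integral_oscillation_le {X : Type*} [TopologicalSpace X] {Φ : ℝ → X → E}
    {v : ℝ → X} {T ε s t K M : ℝ} (hT : 0 < T) (hε : 0 < ε) (hst : s ≤ t)
    (hΦ : Continuous fun p : ℝ × X => Φ p.1 p.2) (hv : ContinuousOn v (Icc s t))
    (hper : ∀ z, Function.Periodic (fun θ => Φ θ z) T) (hmean : ∀ z, ∫ θ in 0..T, Φ θ z = 0)
    (hK : 0 ≤ K) (hlip : ∀ θ, ∀ a ∈ Icc s t, ∀ b ∈ Icc s t, ‖Φ θ (v b) - Φ θ (v a)‖ ≤ K * |b - a|)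
    (hbd : ∀ θ, ∀ τ ∈ Icc s t, ‖Φ θ (v τ)‖ ≤ M) :
    ‖∫ τ in s..t, Φ (τ / ε) (v τ)‖ ≤ ε * T * (K * (t - s) + M) := by
  set P := ε * T
  have hP : 0 < P := by positivity
  have hcont : ContinuousOn (fun τ => Φ (τ / ε) (v τ)) (Icc s t) :=
    hΦ.comp_continuousOn ((continuous_id.div_const ε).continuousOn.prodMk hv)
  refine (norm_integral_le_of_norm_integral_window_le (K := K * P * P) (M := M) hP hst
    (hcont.intervalIntegrable_of_Icc hst) (fun τ hτ => hbd _ τ hτ) (by positivity)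
    fun c hc hcP => ?_).trans_eq (by field_simp)
  have hcI : c ∈ Icc s t := ⟨hc, by linarith⟩
  have hwindow : Icc c (c + P) ⊆ Icc s t := Icc_subset_Icc hc hcP
  calc ‖∫ τ in c..c + P, Φ (τ / ε) (v τ)‖ ≤ K * P * (c + P - c) := by
        refine norm_integral_le_of_sub_integral_eq_zero (g := fun τ => Φ (τ / ε) (v c))
          (by linarith) ((hcont.mono hwindow).intervalIntegrable_of_Icc (by linarith))
          ((hΦ.comp ((continuous_id.div_const ε).prodMk continuous_const)).intervalIntegrable _ _)
          ((hper (v c)).integral_comp_div_eq_zero (hmean _) hε.ne' c) fun τ hτ => ?_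
        calc ‖Φ (τ / ε) (v τ) - Φ (τ / ε) (v c)‖ ≤ K * |τ - c| :=
              hlip _ c hcI τ (hwindow (Ioc_subset_Icc_self hτ))
          _ ≤ K * P := by
              gcongr
              rw [abs_of_pos (sub_pos.2 hτ.1)]; linarith [hτ.2]
    _ = K * P * P := by ring

end

theorem stmt_8_general {X : Type*} [NormedAddCommGroup X] [NormedSpace ℝ X] [CompleteSpace X]
    (T : ℝ) (hT : 0 < T)
    (F : ℝ → X → X) (DF : ℝ → X → (X →L[ℝ] X))
    (hFcont : Continuous (fun p : ℝ × X => F p.1 p.2))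
    (hper : ∀ z, Function.Periodic (fun θ => F θ z) T)
    (hDF : ∀ θ z, HasFDerivAt (F θ) (DF θ z) z)
    (F0 : X → X) (hF0 : ∀ z, F0 z = (1 / T) • ∫ τ in (0:ℝ)..T, F τ z)
    (s L : ℝ)
    (v v' : ℝ → X) (hv : ∀ t ∈ Set.Icc s L, HasDerivAt v (v' t) t)
    (M₂ M₄ : ℝ) (hM₂ : 0 ≤ M₂) (hM₄ : 0 ≤ M₄)
    (hbF : ∀ θ : ℝ, ∀ t ∈ Set.Icc s L, ‖F θ (v t)‖ ≤ M₂)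
    (hbDF : ∀ θ : ℝ, ∀ t ∈ Set.Icc s L, ‖DF θ (v t) (v' t)‖ ≤ M₄) :
    ∀ ε : ℝ, 0 < ε → ∀ t ∈ Set.Icc s L,
      ‖∫ τ in s..t, (F (τ / ε) (v τ) - F0 (v τ))‖
        ≤ ε * T * (4 * M₂ + 2 * M₄ * (L - s)) := by
  intro ε hε t ⟨hst, htL⟩
  have hFint (z : X) : IntervalIntegrable (fun θ => F θ z) volume 0 T :=
    (hFcont.comp (continuous_id.prodMk continuous_const)).intervalIntegrable _ _
  have hF0cont : Continuous F0 := by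
    rw [show F0 = _ from funext hF0]
    exact (continuous_parametric_intervalIntegral_of_continuous'
      (f := fun z θ => F θ z) (hFcont.comp continuous_swap) 0 T).const_smul _
  have hlip (θ : ℝ) {a b : ℝ} (ha : a ∈ Icc s L) (hb : b ∈ Icc s L) :
      ‖F θ (v b) - F θ (v a)‖ ≤ M₄ * |b - a| :=
    (convex_Icc s L).norm_comp_sub_le_of_hasFDerivAt (fun t _ => hDF θ (v t)) hv (hbDF θ) ha hb
  have hIcc : Icc s t ⊆ Icc s L := Icc_subset_Icc_right htL
  have hΦlip (θ a : ℝ) (ha : a ∈ Icc s t) (b : ℝ) (hb : b ∈ Icc s t) :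
      ‖F θ (v b) - F0 (v b) - (F θ (v a) - F0 (v a))‖ ≤ 2 * M₄ * |b - a| := by
    rw [hF0, hF0, sub_sub_sub_comm, ← smul_sub, ← integral_sub (hFint _) (hFint _), mul_assoc]
    exact norm_sub_smul_integral_le hT (fun σ => hlip σ (hIcc ha) (hIcc hb)) θ
  have hΦbd (θ τ : ℝ) (hτ : τ ∈ Icc s t) : ‖F θ (v τ) - F0 (v τ)‖ ≤ 2 * M₂ := by
    rw [hF0]
    exact norm_sub_smul_integral_le hT (fun σ => hbF σ τ (hIcc hτ)) θ
  have hosc := norm_integral_oscillation_le (Φ := fun θ z => F θ z - F0 z) hT hε hst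
    (hFcont.sub (hF0cont.comp continuous_snd))
    (fun τ hτ => (hv τ (hIcc hτ)).continuousAt.continuousWithinAt)
    (fun z θ => by simp only [hper z θ])
    (fun z => by rw [hF0]; exact integral_sub_average_eq_zero hT.ne' (hFint z))
    (by positivity) hΦlip hΦbd
  refine hosc.trans (mul_le_mul_of_nonneg_left ?_ (by positivity))
  nlinarith

/-- Quantitative `O(ε)` estimate of the averaging method: under uniform bounds `M₂` on
`F` and `M₄` on `D_z F(·, v(·))(v'(·))` along a `C¹` curve `v` on `[s,L]`, the oscillatory
integral satisfies `‖∫_s^t (F(τ/ε, v(τ)) − F⁰(v(τ))) dτ‖ ≤ ε T (4M₂ + 2M₄(L−s))`. -/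
theorem stmt_8 {X : Type*} [NormedAddCommGroup X] [NormedSpace ℝ X] [CompleteSpace X]
    (T : ℝ) (hT : 0 < T)
    (F : ℝ → X → X) (DF : ℝ → X → (X →L[ℝ] X))
    (hFcont : Continuous (fun p : ℝ × X => F p.1 p.2))
    (hper : ∀ z, Function.Periodic (fun θ => F θ z) T)
    (hDF : ∀ θ z, HasFDerivAt (F θ) (DF θ z) z)
    (hDFcont : Continuous (fun p : ℝ × X => DF p.1 p.2))
    (F0 : X → X) (hF0 : ∀ z, F0 z = (1 / T) • ∫ τ in (0:ℝ)..T, F τ z)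
    (s L : ℝ) (hsL : s < L)
    (v v' : ℝ → X) (hv : ∀ t ∈ Set.Icc s L, HasDerivAt v (v' t) t)
    (hv' : ContinuousOn v' (Set.Icc s L))
    (M₂ M₄ : ℝ) (hM₂ : 0 ≤ M₂) (hM₄ : 0 ≤ M₄)
    (hbF : ∀ θ : ℝ, ∀ t ∈ Set.Icc s L, ‖F θ (v t)‖ ≤ M₂)
    (hbDF : ∀ θ : ℝ, ∀ t ∈ Set.Icc s L, ‖DF θ (v t) (v' t)‖ ≤ M₄) :
    ∀ ε : ℝ, 0 < ε → ∀ t ∈ Set.Icc s L,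
      ‖∫ τ in s..t, (F (τ / ε) (v τ) - F0 (v τ))‖
        ≤ ε * T * (4 * M₂ + 2 * M₄ * (L - s)) :=
  stmt_8_general T hT F DF hFcont hper hDF F0 hF0 s L v v' hv M₂ M₄ hM₂ hM₄ hbF hbDF
end

section
/- Let X be a complex Banach space, let B₁, B₂ : X → X be continuous linear maps, let s < L be reals, let a, b : ℝ → ℝ be continuously differentiable, and let ψ⁰ ∈ X. For ε > 0 set u_ε(t) := a(t) + b(t) sin(t/ε), and let ψ_ε, ψ_av : [s, L] → X be differentiable functions satisfying ψ_ε(s) = ψ_av(s) = ψ⁰ and, for all t ∈ [s, L], ψ_ε'(t) = −i (u_ε(t) B₁ ψ_ε(t) + u_ε(t)² B₂ ψ_ε(t)) and ψ_av'(t) = −i (a(t) B₁ ψ_av(t) + (a(t)² + b(t)²/2) B₂ ψ_av(t)). Then there exists a constant C > 0, depending only on ‖B₁‖, ‖B₂‖, the suprema of |a|, |b|, |a'|, |b'| on [s, L], L − s, and ‖ψ⁰‖, such that for every ε > 0 and every t ∈ [s, L], ‖ψ_ε(t) − ψ_av(t)‖ ≤ C ε. -/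
/-!
Write `u = a + b sin θ` with `θ = t / ε`. Since `sin² θ = (1 - cos 2θ) / 2`, the generator
`u J₁ + u² J₂` (with `J_k = -i B_k`) is the averaged generator `A(t)` plus the fast terms
`sin θ • V₁(t) + cos 2θ • V₂(t)` with slowly varying coefficients. By Grönwall, `ψ_ε` and
`ψ_ε'` are bounded uniformly in `ε`, so integrating by parts against the fast phase, the
forcing `f = sin θ • V₁ ψ_ε + cos 2θ • V₂ ψ_ε` has a near-primitive
`G = -ε cos θ • V₁ ψ_ε + (ε / 2) sin 2θ • V₂ ψ_ε`: `G = O(ε)` and `G' - f = O(ε)`.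
Then `ψ_ε - ψ_av - G` satisfies a linear differential inequality with data of size `O(ε)`,
and Grönwall again gives `ψ_ε - ψ_av = O(ε)` uniformly on `[s, L]`.
-/

open Set Real

section

variable {E : Type*} [NormedAddCommGroup E] [NormedSpace ℝ E]

theorem gronwallBound_const_mul (c δ K ε x : ℝ) :
    gronwallBound (c * δ) K (c * ε) x = c * gronwallBound δ K ε x := by
  unfold gronwallBound
  split_ifs <;> ring

theorem norm_le_gronwallBound_of_hasDerivAt {f f' : ℝ → E} {δ K ε s L : ℝ}
    (hf : ∀ t ∈ Icc s L, HasDerivAt f (f' t) t) (hs : ‖f s‖ ≤ δ)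
    (bound : ∀ t ∈ Icc s L, ‖f' t‖ ≤ K * ‖f t‖ + ε) :
    ∀ t ∈ Icc s L, ‖f t‖ ≤ gronwallBound δ K ε (t - s) :=
  norm_le_gronwallBound_of_norm_deriv_right_le
    (fun t ht => (hf t ht).continuousAt.continuousWithinAt)
    (fun t ht => (hf t (Ico_subset_Icc_self ht)).hasDerivWithinAt) hs
    (fun t ht => bound t (Ico_subset_Icc_self ht))

theorem norm_le_mul_exp_of_norm_deriv_le {f f' : ℝ → E} {K s L : ℝ} (hK : 0 ≤ K)
    (hf : ∀ t ∈ Icc s L, HasDerivAt f (f' t) t) (bound : ∀ t ∈ Icc s L, ‖f' t‖ ≤ K * ‖f t‖) :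
    ∀ t ∈ Icc s L, ‖f t‖ ≤ ‖f s‖ * exp (K * (L - s)) := by
  intro t ht
  calc ‖f t‖ ≤ gronwallBound ‖f s‖ K 0 (t - s) :=
        norm_le_gronwallBound_of_hasDerivAt hf le_rfl (by simpa using bound) t ht
    _ = ‖f s‖ * exp (K * (t - s)) := gronwallBound_ε0 _ _ _
    _ ≤ ‖f s‖ * exp (K * (L - s)) := by gcongr; exact ht.2

def HasNearPrimitiveOn (f : ℝ → E) (η : ℝ) (S : Set ℝ) : Prop :=
  ∃ G G' : ℝ → E, ∀ t ∈ S, HasDerivAt G (G' t) t ∧ ‖G t‖ ≤ η ∧ ‖G' t - f t‖ ≤ η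

theorem HasNearPrimitiveOn.add {f g : ℝ → E} {η θ : ℝ} {S : Set ℝ}
    (hf : HasNearPrimitiveOn f η S) (hg : HasNearPrimitiveOn g θ S) :
    HasNearPrimitiveOn (f + g) (η + θ) S := by
  obtain ⟨F, F', hF⟩ := hf
  obtain ⟨G, G', hG⟩ := hg
  refine ⟨F + G, F' + G', fun t ht => ?_⟩
  obtain ⟨hFd, hFη, hF'η⟩ := hF t ht
  obtain ⟨hGd, hGθ, hG'θ⟩ := hG t ht
  refine ⟨hFd.add hGd, (norm_add_le _ _).trans (add_le_add hFη hGθ), ?_⟩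
  calc ‖(F' + G') t - (f + g) t‖ = ‖(F' t - f t) + (G' t - g t)‖ := by
        simp only [Pi.add_apply]; abel_nf
    _ ≤ η + θ := (norm_add_le _ _).trans (add_le_add hF'η hG'θ)

theorem hasNearPrimitiveOn_comp_div_smul {c C : ℝ → ℝ} (hC : ∀ x, HasDerivAt C (c x) x)
    (hC1 : ∀ x, |C x| ≤ 1) {ε : ℝ} (hε : 0 < ε) {p p' : ℝ → E} {P : ℝ} {S : Set ℝ}
    (hp : ∀ t ∈ S, HasDerivAt p (p' t) t) (hpP : ∀ t ∈ S, ‖p t‖ ≤ P)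
    (hp'P : ∀ t ∈ S, ‖p' t‖ ≤ P) :
    HasNearPrimitiveOn (fun t => c (t / ε) • p t) (ε * P) S := by
  have hscal (t : ℝ) : HasDerivAt (fun t => ε * C (t / ε)) (c (t / ε)) t :=
    (((hC (t / ε)).comp t ((hasDerivAt_id t).div_const ε)).const_mul ε).congr_deriv
      (by field_simp)
  have hsize (t : ℝ) {x : E} {P : ℝ} (hx : ‖x‖ ≤ P) : ‖(ε * C (t / ε)) • x‖ ≤ ε * P := by
    rw [norm_smul, Real.norm_eq_abs, abs_mul, abs_of_pos hε, mul_assoc]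
    gcongr
    calc |C (t / ε)| * ‖x‖ ≤ 1 * P := by gcongr; exact hC1 _
      _ = P := one_mul P
  refine ⟨fun t => (ε * C (t / ε)) • p t, fun t => (ε * C (t / ε)) • p' t + c (t / ε) • p t,
    fun t ht => ⟨?_, hsize t (hpP t ht), ?_⟩⟩
  · exact (hscal t).smul (hp t ht)
  · simpa only [add_sub_cancel_right] using hsize t (hp'P t ht)

theorem hasNearPrimitiveOn_comp_div_smul_apply {c C : ℝ → ℝ} (hC : ∀ x, HasDerivAt C (c x) x)
    (hC1 : ∀ x, |C x| ≤ 1) {ε : ℝ} (hε : 0 < ε) {V V' : ℝ → E →L[ℝ] E} {ψ ψ' : ℝ → E}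
    {K R R' : ℝ} {S : Set ℝ} (hV : ∀ t ∈ S, HasDerivAt V (V' t) t)
    (hψ : ∀ t ∈ S, HasDerivAt ψ (ψ' t) t) (hVK : ∀ t ∈ S, ‖V t‖ ≤ K)
    (hV'K : ∀ t ∈ S, ‖V' t‖ ≤ K) (hψR : ∀ t ∈ S, ‖ψ t‖ ≤ R) (hψ'R : ∀ t ∈ S, ‖ψ' t‖ ≤ R') :
    HasNearPrimitiveOn (fun t => c (t / ε) • V t (ψ t)) (ε * (K * (R + R'))) S := by
  refine hasNearPrimitiveOn_comp_div_smul hC hC1 hε (fun t ht => (hV t ht).clm_apply (hψ t ht))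
    (fun t ht => ?_) (fun t ht => ?_)
  all_goals have hK : 0 ≤ K := (norm_nonneg _).trans (hVK t ht)
  · calc ‖V t (ψ t)‖ ≤ ‖V t‖ * ‖ψ t‖ := (V t).le_opNorm _
      _ ≤ K * (R + R') := by
        gcongr
        exacts [hVK t ht,
          (hψR t ht).trans (le_add_of_nonneg_right ((norm_nonneg _).trans (hψ'R t ht)))]
  · calc ‖V' t (ψ t) + V t (ψ' t)‖ ≤ ‖V' t‖ * ‖ψ t‖ + ‖V t‖ * ‖ψ' t‖ :=
          (norm_add_le _ _).trans (add_le_add ((V' t).le_opNorm _) ((V t).le_opNorm _))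
      _ ≤ K * R + K * R' := by gcongr; exacts [hV'K t ht, hψR t ht, hVK t ht, hψ'R t ht]
      _ = K * (R + R') := by ring

theorem HasNearPrimitiveOn.norm_le_of_norm_deriv_sub_le {f δ δ' : ℝ → E} {η K s L : ℝ}
    (hf : HasNearPrimitiveOn f η (Icc s L)) (hK : 0 ≤ K)
    (hδ : ∀ t ∈ Icc s L, HasDerivAt δ (δ' t) t) (hδs : δ s = 0)
    (bound : ∀ t ∈ Icc s L, ‖δ' t - f t‖ ≤ K * ‖δ t‖) :
    ∀ t ∈ Icc s L, ‖δ t‖ ≤ η * (1 + gronwallBound 1 K (K + 1) (L - s)) := by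
  obtain ⟨G, G', hG⟩ := hf
  intro t ht
  have hη : 0 ≤ η := (norm_nonneg _).trans (hG t ht).2.1
  have hgron := norm_le_gronwallBound_of_hasDerivAt (f := δ - G) (δ := η * 1) (K := K)
      (ε := η * (K + 1)) (fun τ hτ => (hδ τ hτ).sub (hG τ hτ).1)
      (by simpa [hδs] using (hG s ⟨le_rfl, ht.1.trans ht.2⟩).2.1) (fun τ hτ => ?_) t ht
  · calc ‖δ t‖ ≤ ‖(δ - G) t‖ + ‖G t‖ := norm_le_norm_sub_add _ _
      _ ≤ η * gronwallBound 1 K (K + 1) (t - s) + η := by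
        rw [← gronwallBound_const_mul]; exact add_le_add hgron (hG t ht).2.1
      _ ≤ η * (1 + gronwallBound 1 K (K + 1) (L - s)) := by
        have := gronwallBound_mono (ε := K + 1) zero_le_one (by positivity) hK
          (sub_le_sub_right ht.2 s)
        linarith [mul_le_mul_of_nonneg_left this hη]
  · obtain ⟨-, hGη, hG'η⟩ := hG τ hτ
    calc ‖δ' τ - G' τ‖ ≤ ‖δ' τ - f τ‖ + ‖G' τ - f τ‖ := by
          simpa only [norm_sub_rev (f τ)] using norm_sub_le_norm_sub_add_norm_sub _ (f τ) _
      _ ≤ K * (‖(δ - G) τ‖ + ‖G τ‖) + η := by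
          gcongr
          exact (bound τ hτ).trans (by gcongr; exact norm_le_norm_sub_add _ _)
      _ ≤ K * ‖(δ - G) τ‖ + η * (K + 1) := by nlinarith

theorem hasDerivAt_neg_cos (x : ℝ) : HasDerivAt (fun x => -cos x) (sin x) x :=
  (hasDerivAt_cos x).neg.congr_deriv (neg_neg _)

theorem hasDerivAt_sin_two_mul_div_two (x : ℝ) :
    HasDerivAt (fun x => sin (2 * x) / 2) (cos (2 * x)) x := by
  have := ((hasDerivAt_sin (2 * x)).comp x ((hasDerivAt_id x).const_mul 2)).div_const 2
  exact this.congr_deriv (by simp)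

theorem exists_norm_sub_le_mul_of_oscillating_coeff {A V₁ V₂ V₁' V₂' : ℝ → E →L[ℝ] E}
    {s L : ℝ} (hA : ContinuousOn A (Icc s L))
    (hV₁ : ∀ t ∈ Icc s L, HasDerivAt V₁ (V₁' t) t) (hV₂ : ∀ t ∈ Icc s L, HasDerivAt V₂ (V₂' t) t)
    (hV₁' : ContinuousOn V₁' (Icc s L)) (hV₂' : ContinuousOn V₂' (Icc s L))
    {φ : ℝ → E} {ψ : ℝ → ℝ → E} (hφ : ∀ t ∈ Icc s L, HasDerivAt φ (A t (φ t)) t)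
    (hψ : ∀ ε > 0, ∀ t ∈ Icc s L, HasDerivAt (ψ ε)
      ((A t + sin (t / ε) • V₁ t + cos (2 * (t / ε)) • V₂ t) (ψ ε t)) t)
    (hψs : ∀ ε > 0, ψ ε s = φ s) :
    ∃ C, ∀ ε > 0, ∀ t ∈ Icc s L, ‖ψ ε t - φ t‖ ≤ C * ε := by
  obtain ⟨K, hK0, hK⟩ : ∃ K, 0 ≤ K ∧ ∀ t ∈ Icc s L,
      ‖A t‖ ≤ K ∧ ‖V₁ t‖ ≤ K ∧ ‖V₂ t‖ ≤ K ∧ ‖V₁' t‖ ≤ K ∧ ‖V₂' t‖ ≤ K := by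
    have hV₁c : ContinuousOn V₁ (Icc s L) := fun t ht => (hV₁ t ht).continuousAt.continuousWithinAt
    have hV₂c : ContinuousOn V₂ (Icc s L) := fun t ht => (hV₂ t ht).continuousAt.continuousWithinAt
    obtain ⟨K, hK⟩ := isCompact_Icc.exists_bound_of_continuousOn
      ((((hA.norm.add hV₁c.norm).add hV₂c.norm).add hV₁'.norm).add hV₂'.norm)
    refine ⟨max K 0, le_max_right _ _, fun t ht => ?_⟩
    have := (le_abs_self _).trans ((hK t ht).trans (le_max_left K 0))
    simp only [Pi.add_apply] at this
    refine ⟨?_, ?_, ?_, ?_, ?_⟩ <;> linarith [norm_nonneg (A t), norm_nonneg (V₁ t),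
      norm_nonneg (V₂ t), norm_nonneg (V₁' t), norm_nonneg (V₂' t)]
  have hAε (ε : ℝ) (t : ℝ) (ht : t ∈ Icc s L) :
      ‖A t + sin (t / ε) • V₁ t + cos (2 * (t / ε)) • V₂ t‖ ≤ 3 * K := by
    obtain ⟨hAK, hV₁K, hV₂K, -, -⟩ := hK t ht
    calc _ ≤ ‖A t‖ + |sin (t / ε)| * ‖V₁ t‖ + |cos (2 * (t / ε))| * ‖V₂ t‖ :=
          norm_add₃_le.trans_eq (by simp only [norm_smul, Real.norm_eq_abs])
      _ ≤ K + 1 * K + 1 * K := by gcongr <;> first | exact abs_sin_le_one _ | exact abs_cos_le_one _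
      _ = 3 * K := by ring
  set R := ‖φ s‖ * exp (3 * K * (L - s))
  have hψR (ε : ℝ) (hε : 0 < ε) : ∀ t ∈ Icc s L, ‖ψ ε t‖ ≤ R := by
    simpa only [hψs ε hε] using norm_le_mul_exp_of_norm_deriv_le (by positivity) (hψ ε hε)
      fun t ht => (_ : E →L[ℝ] E).le_of_opNorm_le (hAε ε t ht) _
  refine ⟨2 * (K * (R + 3 * K * R)) * (1 + gronwallBound 1 K (K + 1) (L - s)),
    fun ε hε t ht => ?_⟩
  have hψ'R : ∀ t ∈ Icc s L,
      ‖(A t + sin (t / ε) • V₁ t + cos (2 * (t / ε)) • V₂ t) (ψ ε t)‖ ≤ 3 * K * R := fun t ht =>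
    (ContinuousLinearMap.le_of_opNorm_le _ (hAε ε t ht) _).trans (by gcongr; exact hψR ε hε t ht)
  have hf := (hasNearPrimitiveOn_comp_div_smul_apply hasDerivAt_neg_cos
      (fun x => by simpa only [abs_neg] using abs_cos_le_one x) hε hV₁ (hψ ε hε)
      (fun t ht => (hK t ht).2.1) (fun t ht => (hK t ht).2.2.2.1) (hψR ε hε) hψ'R).add
    (hasNearPrimitiveOn_comp_div_smul_apply hasDerivAt_sin_two_mul_div_two
      (fun x => by rw [abs_div, abs_two]; linarith [abs_sin_le_one (2 * x)]) hε hV₂ (hψ ε hε)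
      (fun t ht => (hK t ht).2.2.1) (fun t ht => (hK t ht).2.2.2.2) (hψR ε hε) hψ'R)
  have := hf.norm_le_of_norm_deriv_sub_le (δ := fun t => ψ ε t - φ t) hK0
    (fun t ht => (hψ ε hε t ht).sub (hφ t ht)) (by rw [hψs ε hε, sub_self]) (fun t ht => ?_) t ht
  · exact this.trans_eq (by ring)
  · simp only [add_apply, smul_apply, Pi.add_apply]
    rw [show ∀ x y u v : E, x + y + u - v - (y + u) = x - v by intros; abel, ← map_sub]
    exact (A t).le_of_opNorm_le (hK t ht).1 _

theorem exists_norm_sub_le_mul_of_bilinear_averaging (J₁ J₂ : E →L[ℝ] E) {a b a' b' : ℝ → ℝ}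
    {s L : ℝ} (ha : ∀ t ∈ Icc s L, HasDerivAt a (a' t) t)
    (hb : ∀ t ∈ Icc s L, HasDerivAt b (b' t) t)
    (ha' : ContinuousOn a' (Icc s L)) (hb' : ContinuousOn b' (Icc s L))
    {φ : ℝ → E} {ψ : ℝ → ℝ → E}
    (hφ : ∀ t ∈ Icc s L, HasDerivAt φ ((a t • J₁ + (a t ^ 2 + b t ^ 2 / 2) • J₂) (φ t)) t)
    (hψ : ∀ ε > 0, ∀ t ∈ Icc s L, HasDerivAt (ψ ε)
      (((a t + b t * sin (t / ε)) • J₁ + (a t + b t * sin (t / ε)) ^ 2 • J₂) (ψ ε t)) t)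
    (hψs : ∀ ε > 0, ψ ε s = φ s) :
    ∃ C, ∀ ε > 0, ∀ t ∈ Icc s L, ‖ψ ε t - φ t‖ ≤ C * ε := by
  have hac : ContinuousOn a (Icc s L) := fun t ht => (ha t ht).continuousAt.continuousWithinAt
  have hbc : ContinuousOn b (Icc s L) := fun t ht => (hb t ht).continuousAt.continuousWithinAt
  refine exists_norm_sub_le_mul_of_oscillating_coeff
    (V₁ := fun t => b t • J₁ + (2 * a t * b t) • J₂) (V₂ := fun t => (-(b t ^ 2 / 2)) • J₂)
    (V₁' := fun t => b' t • J₁ + (2 * a' t * b t + 2 * a t * b' t) • J₂)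
    (V₂' := fun t => (-(b t * b' t)) • J₂)
    (by fun_prop) (fun t ht => ?_) (fun t ht => ?_) (by fun_prop) (by fun_prop) hφ
    (fun ε hε t ht => ?_) hψs
  · exact ((hb t ht).smul_const J₁).add ((((ha t ht).const_mul 2).mul (hb t ht)).smul_const J₂)
  · exact ((((hb t ht).pow 2).div_const 2).neg.smul_const J₂).congr_deriv (by congr 1; simp; ring)
  · convert hψ ε hε t ht using 2
    have := cos_sq_add_sin_sq (t / ε)
    rw [cos_two_mul]
    match_scalars
    · ring
    · linear_combination (-b t ^ 2) * this

end

theorem stmt_11_general {X : Type*} [NormedAddCommGroup X] [NormedSpace ℂ X]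
    (B₁ B₂ : X →L[ℂ] X) (s L : ℝ)
    (a b a' b' : ℝ → ℝ)
    (ha : ∀ t, HasDerivAt a (a' t) t) (hb : ∀ t, HasDerivAt b (b' t) t)
    (ha' : Continuous a') (hb' : Continuous b')
    (ψ0 : X) (ψav : ℝ → X) (ψ : ℝ → ℝ → X)
    (hψavs : ψav s = ψ0)
    (hψav : ∀ t ∈ Set.Icc s L, HasDerivAt ψav
      ((-Complex.I) • (((a t : ℝ) : ℂ) • B₁ (ψav t)
        + (((a t ^ 2 + b t ^ 2 / 2 : ℝ)) : ℂ) • B₂ (ψav t))) t)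
    (hψs : ∀ ε : ℝ, 0 < ε → ψ ε s = ψ0)
    (hψ : ∀ ε : ℝ, 0 < ε → ∀ t ∈ Set.Icc s L, HasDerivAt (ψ ε)
      ((-Complex.I) • (((a t + b t * Real.sin (t / ε) : ℝ) : ℂ) • B₁ (ψ ε t)
        + ((((a t + b t * Real.sin (t / ε)) ^ 2 : ℝ)) : ℂ) • B₂ (ψ ε t))) t) :
    ∃ C > 0, ∀ ε : ℝ, 0 < ε → ∀ t ∈ Set.Icc s L, ‖ψ ε t - ψav t‖ ≤ C * ε := by
  set J₁ := ((-Complex.I) • B₁).restrictScalars ℝ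
  set J₂ := ((-Complex.I) • B₂).restrictScalars ℝ
  have hJ (x y : ℝ) (v : X) :
      (x • J₁ + y • J₂) v = (-Complex.I) • ((x : ℂ) • B₁ v + (y : ℂ) • B₂ v) := by
    simp [J₁, J₂, Complex.coe_smul, smul_comm x Complex.I, smul_comm y Complex.I]
  obtain ⟨C, hC⟩ := exists_norm_sub_le_mul_of_bilinear_averaging J₁ J₂ (fun t _ => ha t)
    (fun t _ => hb t) ha'.continuousOn hb'.continuousOn
    (fun t ht => by simpa only [hJ] using hψav t ht)
    (fun ε hε t ht => by simpa only [hJ] using hψ ε hε t ht)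
    (fun ε hε => (hψs ε hε).trans hψavs.symm)
  exact ⟨max C 1, by positivity,
    fun ε hε t ht => (hC ε hε t ht).trans (by gcongr; exact le_max_left _ _)⟩

/-- Averaging approximation property for the bilinear control system with dipolar and
polarizability couplings: the solution driven by the highly oscillating control
`u_ε(t) = a(t) + b(t) sin(t/ε)` stays `O(ε)`-close, uniformly on `[s, L]`, to the
solution of the averaged system in which `u` is replaced by `a` and `u²` by
`a² + b²/2`. -/
theorem stmt_11 {X : Type*} [NormedAddCommGroup X] [NormedSpace ℂ X] [CompleteSpace X]
    (B₁ B₂ : X →L[ℂ] X) (s L : ℝ) (hsL : s < L)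
    (a b a' b' : ℝ → ℝ)
    (ha : ∀ t, HasDerivAt a (a' t) t) (hb : ∀ t, HasDerivAt b (b' t) t)
    (ha' : Continuous a') (hb' : Continuous b')
    (ψ0 : X) (ψav : ℝ → X) (ψ : ℝ → ℝ → X)
    (hψavs : ψav s = ψ0)
    (hψav : ∀ t ∈ Set.Icc s L, HasDerivAt ψav
      ((-Complex.I) • (((a t : ℝ) : ℂ) • B₁ (ψav t)
        + (((a t ^ 2 + b t ^ 2 / 2 : ℝ)) : ℂ) • B₂ (ψav t))) t)
    (hψs : ∀ ε : ℝ, 0 < ε → ψ ε s = ψ0)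
    (hψ : ∀ ε : ℝ, 0 < ε → ∀ t ∈ Set.Icc s L, HasDerivAt (ψ ε)
      ((-Complex.I) • (((a t + b t * Real.sin (t / ε) : ℝ) : ℂ) • B₁ (ψ ε t)
        + ((((a t + b t * Real.sin (t / ε)) ^ 2 : ℝ)) : ℂ) • B₂ (ψ ε t))) t) :
    ∃ C > 0, ∀ ε : ℝ, 0 < ε → ∀ t ∈ Set.Icc s L, ‖ψ ε t - ψav t‖ ≤ C * ε :=
  stmt_11_general B₁ B₂ s L a b a' b' ha hb ha' hb' ψ0 ψav ψ hψavs hψav hψs hψ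
end
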